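/- arXiv:2204.05947 — 4 statements merged into one kernel-verified Lean document; each statement's English description precedes it below -/
import Mathlib

section
/- If for each k, the conditional expectation of Y^k given (S^1 = s_1, ..., S^K = s_K) equals s_k for all (s_1,...,s_K), then for any weights w_1,...,w_K, the composite score S = Σ_k w_k S^k is calibrated for the composite outcome Y = Σ_k w_k Y^k, i.e., E(Y | S = s) = s for all s. -/
open MeasureTheory ProbabilityTheory

/-!
Conditioning on the whole vector `(S¹, …, Sᴷ)` and using linearity of conditional expectation
gives `E(Y | S¹, …, Sᴷ) = S`. Since `S` is a function of the score vector, `σ(S)` is coarser than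
`σ(S¹, …, Sᴷ)`, and the tower property turns this into `E(Y | S) = E(S | S) = S`.
-/

section

variable {α E : Type*} {m₀ : MeasurableSpace α} {μ : Measure α}
  [NormedAddCommGroup E] [NormedSpace ℝ E] [CompleteSpace E]

theorem condExp_eq_of_le_of_condExp_eq {m₁ m₂ : MeasurableSpace α} {f g : α → E}
    (hm₁₂ : m₁ ≤ m₂) (hm₂ : m₂ ≤ m₀) [SigmaFinite (μ.trim (hm₁₂.trans hm₂))]
    (hg : StronglyMeasurable[m₁] g) (hfg : μ[f | m₂] =ᵐ[μ] g) :
    μ[f | m₁] =ᵐ[μ] g := by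
  have := sigmaFiniteTrim_mono (μ := μ) hm₂ hm₁₂
  have hg_int : Integrable g μ := integrable_condExp.congr hfg
  calc μ[f | m₁] =ᵐ[μ] μ[μ[f | m₂] | m₁] := (condExp_condExp_of_le hm₁₂ hm₂).symm
    _ =ᵐ[μ] μ[g | m₁] := condExp_congr_ae hfg
    _ = g := condExp_of_stronglyMeasurable (hm₁₂.trans hm₂) hg hg_int

theorem condExp_weightedSum_of_condExp_eq {ι : Type*} [Fintype ι] {m : MeasurableSpace α}
    {Y S : ι → α → ℝ} (w : ι → ℝ) (hY : ∀ k, Integrable (Y k) μ)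
    (hYS : ∀ k, μ[Y k | m] =ᵐ[μ] S k) :
    μ[fun x => ∑ k, w k * Y k x | m] =ᵐ[μ] fun x => ∑ k, w k * S k x := by
  have hsum : (fun x => ∑ k, w k * Y k x) = ∑ k, w k • Y k := by
    ext x; simp
  have hterm : ∀ k, μ[w k • Y k | m] =ᵐ[μ] w k • S k := fun k =>
    (condExp_smul (w k) (Y k) m).trans ((hYS k).const_smul (w k))
  rw [hsum]
  filter_upwards [condExp_finsetSum (fun k _ => (hY k).smul (w k)) m, ae_all_iff.2 hterm]
    with x hx hk
  rw [hx, Finset.sum_apply]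
  exact Finset.sum_congr rfl fun k _ => hk k

end

/-- If `E(Y^k | S^1,...,S^K) = S^k` a.s. for each `k`, then the composite
score `S = Σ_k w_k S^k` is calibrated for the composite outcome `Y = Σ_k w_k Y^k`:
`E(Y | S) = S` a.s. -/
theorem composite_calibration
    {Ω : Type*} [MeasurableSpace Ω] (μ : Measure Ω) [IsProbabilityMeasure μ]
    (K : ℕ) (Y S : Fin K → Ω → ℝ) (w : Fin K → ℝ)
    (hSmeas : ∀ k, Measurable (S k)) (hYint : ∀ k, Integrable (Y k) μ)
    (hcal : ∀ k,
      μ[Y k | MeasurableSpace.comap (fun ω => fun k => S k ω) inferInstance] =ᵐ[μ] S k) :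
    μ[(fun ω => ∑ k, w k * Y k ω) |
        MeasurableSpace.comap (fun ω => ∑ k, w k * S k ω) inferInstance] =ᵐ[μ]
      (fun ω => ∑ k, w k * S k ω) := by
  have hcoarser : MeasurableSpace.comap (fun ω => ∑ k, w k * S k ω) inferInstance ≤
      MeasurableSpace.comap (fun ω => fun k => S k ω) inferInstance :=
    MeasurableSpace.comap_le_comap_of_eq_comp (fun v : Fin K → ℝ => ∑ k, w k * v k)
      (by fun_prop) rfl
  have hvec : Measurable fun ω => fun k => S k ω := measurable_pi_lambda _ hSmeas
  exact condExp_eq_of_le_of_condExp_eq hcoarser hvec.comap_le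
    (comap_measurable _).stronglyMeasurable (condExp_weightedSum_of_condExp_eq w hYint hcal)
end

section
/- If transformed scores are defined by T^k = E(Y^k | S^1,...,S^K, G), then for any weights w_1,...,w_K the composite transformed score T = Σ_k w_k T^k satisfies E(Σ_k w_k Y^k | T, G) = T almost surely; in particular this conditional expectation is the same function of T on every group, so the composite model satisfies predictive rate parity across groups. -/
/-!
The composite score `T = Σ_k w_k T^k` is measurable with respect to `σ(S, G)`, and by linearity
of conditional expectation `E(Σ_k w_k Y^k | S, G) = T`. Since `σ(T, G) ⊆ σ(S, G)`, the tower
property gives `E(Σ_k w_k Y^k | T, G) = E(T | T, G) = T`.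
-/

open MeasureTheory

namespace MeasureTheory

variable {Ω E : Type*} [NormedAddCommGroup E] [NormedSpace ℝ E] [CompleteSpace E]
  {m' m m₀ : MeasurableSpace Ω} {μ : Measure Ω}

theorem condExp_finsetSum_smul {ι : Type*} (s : Finset ι) (c : ι → ℝ) {f : ι → Ω → E}
    (hf : ∀ i ∈ s, Integrable (f i) μ) :
    μ[fun ω => ∑ i ∈ s, c i • f i ω | m] =ᵐ[μ] fun ω => ∑ i ∈ s, c i • μ[f i | m] ω := by
  have hsum : (fun ω => ∑ i ∈ s, c i • f i ω) = ∑ i ∈ s, c i • f i := by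
    ext ω; simp only [Finset.sum_apply, Pi.smul_apply]
  have hterms : ∀ᵐ ω ∂μ, ∀ i ∈ s, μ[c i • f i | m] ω = c i • μ[f i | m] ω :=
    (Filter.eventually_all_finset s).2 fun i _ => condExp_smul (c i) (f i) m
  filter_upwards [condExp_finsetSum (fun i hi => (hf i hi).smul (c i)) m, hterms]
    with ω hω hterms_ω
  rw [hsum, hω, Finset.sum_apply]
  exact Finset.sum_congr rfl hterms_ω

theorem condExp_ae_eq_of_condExp_ae_eq_of_le [IsFiniteMeasure μ] (hm' : m' ≤ m) (hm : m ≤ m₀)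
    {f g : Ω → E} (hfg : μ[f | m] =ᵐ[μ] g) (hg : StronglyMeasurable[m'] g) :
    μ[f | m'] =ᵐ[μ] g :=
  calc μ[f | m'] =ᵐ[μ] μ[μ[f | m] | m'] := (condExp_condExp_of_le hm' hm).symm
    _ =ᵐ[μ] μ[g | m'] := condExp_congr_ae hfg
    _ = g := condExp_of_stronglyMeasurable (hm'.trans hm) hg (integrable_condExp.congr hfg)

theorem condExp_comap_prodMk_ae_eq [MeasurableSpace E] [BorelSpace E]
    [SecondCountableTopology E] {β : Type*} [MeasurableSpace β]
    [IsFiniteMeasure μ] (hm : m ≤ m₀) {f g : Ω → E} (hfg : μ[f | m] =ᵐ[μ] g)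
    (hg : Measurable[m] g) {φ : Ω → β} (hφ : Measurable[m] φ) :
    μ[f | MeasurableSpace.comap (fun ω => (g ω, φ ω)) inferInstance] =ᵐ[μ] g :=
  condExp_ae_eq_of_condExp_ae_eq_of_le (hg.prodMk hφ).comap_le hm hfg
    (measurable_fst.comp (Measurable.of_comap_le le_rfl)).stronglyMeasurable

end MeasureTheory

/-- With transformed scores `T^k = E(Y^k | S^1,...,S^K, G)` and composite
transformed score `T = Σ_k w_k T^k`, we have `E(Σ_k w_k Y^k | T, G) = T` a.s.; in
particular the conditional expectation of the composite outcome given `(T, G)` equals `T`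
on every group, so the composite model satisfies predictive rate parity across groups. -/
theorem multiobjective_parity
    {Ω γ : Type*} [MeasurableSpace Ω] [MeasurableSpace γ]
    (μ : Measure Ω) [IsProbabilityMeasure μ]
    (K : ℕ) (Y S : Fin K → Ω → ℝ) (G : Ω → γ) (w : Fin K → ℝ)
    (hSmeas : ∀ k, Measurable (S k)) (hGmeas : Measurable G)
    (hYint : ∀ k, Integrable (Y k) μ)
    (T : Fin K → Ω → ℝ)
    (hT : ∀ k, T k =
      μ[Y k | MeasurableSpace.comap (fun ω => (fun k => S k ω, G ω)) inferInstance]) :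
    μ[(fun ω => ∑ k, w k * Y k ω) |
        MeasurableSpace.comap (fun ω => (∑ k, w k * T k ω, G ω)) inferInstance] =ᵐ[μ]
      (fun ω => ∑ k, w k * T k ω) := by
  refine condExp_comap_prodMk_ae_eq
    ((measurable_pi_lambda _ hSmeas).prodMk hGmeas).comap_le ?_ ?_
    (measurable_snd.comp (Measurable.of_comap_le le_rfl))
  · simpa only [hT, smul_eq_mul] using condExp_finsetSum_smul Finset.univ w fun k _ => hYint k
  · simp only [hT]
    exact Finset.measurable_sum _ fun k _ =>
      measurable_const.mul stronglyMeasurable_condExp.measurable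
end

section
/- If the score S of group g_1 is a.s. equal to a constant s_1 and the score of group g_2 is a.s. equal to a different constant s_2 with s_2 > s_1, and E(Y | G=g_1) > E(Y | G=g_2), then the model vacuously satisfies the naive conditional-expectation equality formulation of predictive rate parity (the conditional expectations agree on the common support, which is empty), yet fails Definition 2's ordering condition: P(B(O_{g_1}, O_{g_2})) > 0. -/
open MeasureTheory

/-- If the score of group `g₁` is a.s. a constant `s₁` with conditional
expected outcome `o₁`, the score of group `g₂` is a.s. a constant `s₂ > s₁` with
conditional expected outcome `o₂ < o₁`, then the naive formulation of predictive rate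
parity is vacuously satisfied (the supports are disjoint), yet the ordering condition of
Definition 2 fails: the bad-ordering event
`B = {ω : O_{g₁}(ω) > O_{g₂}(ω) ∧ S_{g₁}(ω) < S_{g₂}(ω)}` has positive probability. -/
theorem ordering_condition_fails
    {Ω : Type*} [MeasurableSpace Ω] (μ : Measure Ω) [IsProbabilityMeasure μ]
    (O₁ O₂ S₁ S₂ : Ω → ℝ) (o₁ o₂ s₁ s₂ : ℝ)
    (hO₁ : O₁ =ᵐ[μ] fun _ => o₁) (hO₂ : O₂ =ᵐ[μ] fun _ => o₂)
    (hS₁ : S₁ =ᵐ[μ] fun _ => s₁) (hS₂ : S₂ =ᵐ[μ] fun _ => s₂)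
    (hs : s₁ < s₂) (ho : o₂ < o₁) :
    0 < μ {ω | O₁ ω > O₂ ω ∧ S₁ ω < S₂ ω} := by
  have h_bad_ae : ∀ᵐ ω ∂μ, O₁ ω > O₂ ω ∧ S₁ ω < S₂ ω := by
    filter_upwards [hO₁, hO₂, hS₁, hS₂] with ω h₁ h₂ h₃ h₄
    rw [h₁, h₂, h₃, h₄]
    exact ⟨ho, hs⟩
  exact pos_iff_ne_zero.2 (frequently_ae_iff.1 h_bad_ae.frequently)
end

section
/- If each individual score is calibrated marginally (E(Y^k | S^k) = S^k a.s. for each k) but not jointly, the composite score S = Σ w_k S^k need not be calibrated for Y = Σ w_k Y^k: there exist random variables (Y^1, Y^2, S^1, S^2) and weights with E(Y^k | S^k) = S^k for k = 1,2 yet E(Y^1 + Y^2 | S^1 + S^2) ≠ S^1 + S^2 with positive probability. -/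
open MeasureTheory

/-! Take a fair coin `ω`, let `Y₁ = Y₂ = S₁` be its indicator and `S₂ ≡ 1/2`. Both scores are
calibrated: `Y₁` is a function of `S₁`, and `S₂` is the constant `𝔼 Y₂`. But `S₁ + S₂` still
determines `ω`, so `𝔼(Y₁ + Y₂ | S₁ + S₂) = 2 S₁`, which differs from `S₁ + 1/2` at every outcome:
conditioning on `S₂` alone forgets that `Y₂` is perfectly correlated with `S₁`. -/

section CondExpComap

variable {Ω β E : Type*} [MeasurableSpace Ω] [MeasurableSpace β]
  [NormedAddCommGroup E] [NormedSpace ℝ E] {μ : Measure Ω}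

theorem condExp_comap_comp [IsFiniteMeasure μ] {S : Ω → β} {g : β → E} (hS : Measurable S)
    (hg : StronglyMeasurable g) (hgS : Integrable (g ∘ S) μ) :
    μ[g ∘ S | MeasurableSpace.comap S inferInstance] = g ∘ S :=
  condExp_of_stronglyMeasurable hS.comap_le (hg.comp_measurable (comap_measurable S)) hgS

theorem condExp_comap_const [CompleteSpace E] [IsProbabilityMeasure μ] (b : β) (Y : Ω → E) :
    μ[Y | MeasurableSpace.comap (fun _ => b) inferInstance] = fun _ => ∫ ω, Y ω ∂μ := by
  rw [MeasurableSpace.comap_const, condExp_bot]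

end CondExpComap

theorem integral_toNat_uniformOfFintype_bool :
    ∫ b, (b.toNat : ℝ) ∂(PMF.uniformOfFintype Bool).toMeasure = 1 / 2 := by
  rw [PMF.integral_eq_sum]
  norm_num [PMF.uniformOfFintype_apply]

/-- Marginal calibration of individual scores does not imply composite
calibration: there exist random variables `(Y¹, Y², S¹, S²)` with `E(Yᵏ | Sᵏ) = Sᵏ` a.s.
for `k = 1, 2`, yet `E(Y¹ + Y² | S¹ + S²) ≠ S¹ + S²` on a set of positive measure. -/
theorem marginal_calibration_insufficient :
    ∃ (Ω : Type) (_ : MeasurableSpace Ω) (μ : Measure Ω) (_ : IsProbabilityMeasure μ)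
      (Y₁ Y₂ S₁ S₂ : Ω → ℝ),
      Integrable Y₁ μ ∧ Integrable Y₂ μ ∧ Measurable S₁ ∧ Measurable S₂ ∧
      μ[Y₁ | MeasurableSpace.comap S₁ inferInstance] =ᵐ[μ] S₁ ∧
      μ[Y₂ | MeasurableSpace.comap S₂ inferInstance] =ᵐ[μ] S₂ ∧
      ¬ (μ[(fun ω => Y₁ ω + Y₂ ω) |
            MeasurableSpace.comap (fun ω => S₁ ω + S₂ ω) inferInstance] =ᵐ[μ]
          fun ω => S₁ ω + S₂ ω) := by
  set coin : Bool → ℝ := fun b => b.toNat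
  refine ⟨Bool, inferInstance, (PMF.uniformOfFintype Bool).toMeasure, inferInstance,
    coin, coin, coin, fun _ => 1 / 2, .of_finite, .of_finite, measurable_from_top,
    measurable_const, ?_, ?_, ?_⟩
  · exact (condExp_comap_comp (g := id) measurable_from_top stronglyMeasurable_id
      .of_finite).eventuallyEq
  · rw [condExp_comap_const, integral_toNat_uniformOfFintype_bool]
  · have hsum : (fun b => coin b + coin b) = (fun x => 2 * x - 1) ∘ fun b => coin b + 1 / 2 := by
      funext b; simp only [Function.comp_apply]; ring
    beta_reduce
    rw [hsum, condExp_comap_comp measurable_from_top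
      (by fun_prop : Measurable fun x : ℝ => 2 * x - 1).stronglyMeasurable .of_finite]
    intro h
    obtain ⟨b, hb⟩ := h.exists
    cases b <;> norm_num [coin] at hb
end
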